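/- arXiv:1907.13325 — 4 statements merged into one kernel-verified Lean document; each statement's English description precedes it below -/
import Mathlib

section
/- Let {a_n} and {b_n} be sequences of nonnegative real numbers and α > β > 0 constants such that a_n ≍ e^{-αn} and b_n ≍ e^{-βn} (i.e., there exist positive constants c₁, c₂ with c₁ e^{-αn} ≤ a_n ≤ c₂ e^{-αn} and similarly for b_n). Then there exist positive constants C₁, C₂ (independent of η) such that for all sufficiently small η > 0: C₁ η^{β/α - 1} ≤ Σ_{n=1}^∞ b_n/(a_n + η) ≤ C₂ η^{β/α - 1}. -/
/-!
Write `p = e^{-α}` and `s = e^{-β}`, so `p < s < 1`, and pick `N` with `p^{N+1} < η ≤ p^N`;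
then `η^{β/α - 1}` lies between `(s/p)^N` and `(s/p)^{N+1}`, so it suffices to show that the
series is of order `(s/p)^N`. At `n = N` both `a_N` and `η` are of size `p^N`, so that single
term is already `≳ s^N / p^N`. For `n < N` the terms are at most `b_n / a_n ≲ (s/p)^n`, a
geometric sum dominated by its last term, and for `n ≥ N` they are at most `b_n / η`, a geometric
tail of size `s^N / η ≤ s^N / p^{N+1}`.
-/

open Real Finset

section GeometricComparison

variable {a b : ℕ → ℝ} {p s c₁ c₂ d₁ d₂ η : ℝ}

lemma summable_div_add_of_le_geometric (hs0 : 0 ≤ s) (hs1 : s < 1) (ha0 : ∀ n, 0 ≤ a n)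
    (hb0 : ∀ n, 0 ≤ b n) (hb : ∀ n, b n ≤ d₂ * s ^ n) (hη : 0 < η) :
    Summable fun n ↦ b n / (a n + η) := by
  refine .of_nonneg_of_le (fun n ↦ div_nonneg (hb0 n) (by linarith [ha0 n])) (fun n ↦ ?_)
    ((summable_geometric_of_lt_one hs0 hs1).mul_left (d₂ / η))
  calc b n / (a n + η) ≤ b n / η := div_le_div_of_nonneg_left (hb0 n) hη (by linarith [ha0 n])
    _ ≤ d₂ * s ^ n / η := by gcongr; exact hb n
    _ = d₂ / η * s ^ n := by ring

lemma sum_range_div_add_le (hp : 0 < p) (hps : p < s) (hc₁ : 0 < c₁) (hη : 0 ≤ η)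
    (hb0 : ∀ n, 0 ≤ b n) (ha : ∀ n, c₁ * p ^ n ≤ a n) (hb : ∀ n, b n ≤ d₂ * s ^ n) (N : ℕ) :
    ∑ n ∈ range N, b n / (a n + η) ≤ d₂ / (c₁ * (s / p - 1)) * (s / p) ^ N := by
  have hr : 1 < s / p := (one_lt_div hp).2 hps
  have hterm : ∀ n, b n / (a n + η) ≤ d₂ / c₁ * (s / p) ^ n := fun n ↦ by
    have han : 0 < a n := lt_of_lt_of_le (by positivity) (ha n)
    calc b n / (a n + η) ≤ b n / a n := div_le_div_of_nonneg_left (hb0 n) han (by linarith)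
      _ ≤ d₂ * s ^ n / (c₁ * p ^ n) := div_le_div₀ (by linarith [hb0 n, hb n]) (hb n)
          (by positivity) (ha n)
      _ = d₂ / c₁ * (s / p) ^ n := by rw [div_pow]; field_simp
  have hd₂ : 0 ≤ d₂ := by
    have := (hb0 0).trans (hb 0); rwa [pow_zero, mul_one] at this
  calc ∑ n ∈ range N, b n / (a n + η) ≤ ∑ n ∈ range N, d₂ / c₁ * (s / p) ^ n :=
        sum_le_sum fun n _ ↦ hterm n
    _ = d₂ / c₁ * (((s / p) ^ N - 1) / (s / p - 1)) := by rw [← mul_sum, geom_sum_eq hr.ne']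
    _ ≤ d₂ / c₁ * ((s / p) ^ N / (s / p - 1)) := by gcongr; linarith
    _ = d₂ / (c₁ * (s / p - 1)) * (s / p) ^ N := by field_simp

lemma tsum_nat_add_div_add_le (hp : 0 < p) (hs0 : 0 ≤ s) (hs1 : s < 1) (ha0 : ∀ n, 0 ≤ a n)
    (hb0 : ∀ n, 0 ≤ b n) (hb : ∀ n, b n ≤ d₂ * s ^ n) {N : ℕ} (hη : p ^ (N + 1) ≤ η) :
    ∑' n, b (n + N) / (a (n + N) + η) ≤ d₂ / (p * (1 - s)) * (s / p) ^ N := by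
  have hη0 : 0 < η := lt_of_lt_of_le (by positivity) hη
  have hd₂ : 0 ≤ d₂ := by
    have := (hb0 0).trans (hb 0); rwa [pow_zero, mul_one] at this
  have hgeom := (summable_geometric_of_lt_one hs0 hs1).mul_left (d₂ * s ^ N / η)
  have hterm : ∀ n, b (n + N) / (a (n + N) + η) ≤ d₂ * s ^ N / η * s ^ n := fun n ↦
    calc b (n + N) / (a (n + N) + η) ≤ b (n + N) / η :=
          div_le_div_of_nonneg_left (hb0 _) hη0 (by linarith [ha0 (n + N)])
      _ ≤ d₂ * s ^ (n + N) / η := by gcongr; exact hb _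
      _ = d₂ * s ^ N / η * s ^ n := by rw [pow_add]; ring
  have hsum := (summable_nat_add_iff N).2 (summable_div_add_of_le_geometric hs0 hs1 ha0 hb0 hb hη0)
  calc ∑' n, b (n + N) / (a (n + N) + η) ≤ ∑' n, d₂ * s ^ N / η * s ^ n :=
        hsum.tsum_le_tsum hterm hgeom
    _ = d₂ * s ^ N / η * (1 - s)⁻¹ := by rw [tsum_mul_left, tsum_geometric_of_lt_one hs0 hs1]
    _ ≤ d₂ * s ^ N / p ^ (N + 1) * (1 - s)⁻¹ := by gcongr
    _ = d₂ / (p * (1 - s)) * (s / p) ^ N := by rw [div_pow, pow_succ]; field_simp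

lemma tsum_div_add_le (hp : 0 < p) (hps : p < s) (hs1 : s < 1) (hc₁ : 0 < c₁)
    (ha0 : ∀ n, 0 ≤ a n) (hb0 : ∀ n, 0 ≤ b n) (ha : ∀ n, c₁ * p ^ n ≤ a n)
    (hb : ∀ n, b n ≤ d₂ * s ^ n) {N : ℕ} (hη : p ^ (N + 1) ≤ η) :
    ∑' n, b n / (a n + η) ≤ (d₂ / (c₁ * (s / p - 1)) + d₂ / (p * (1 - s))) * (s / p) ^ N := by
  have hs0 : 0 ≤ s := (hp.trans hps).le
  have hη0 : 0 < η := lt_of_lt_of_le (by positivity) hη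
  rw [← (summable_div_add_of_le_geometric hs0 hs1 ha0 hb0 hb hη0).sum_add_tsum_nat_add N,
    add_mul]
  exact add_le_add (sum_range_div_add_le hp hps hc₁ hη0.le hb0 ha hb N)
    (tsum_nat_add_div_add_le hp hs0 hs1 ha0 hb0 hb hη)

lemma le_tsum_div_add (hp : 0 < p) (hs0 : 0 ≤ s) (hs1 : s < 1)
    (ha0 : ∀ n, 0 ≤ a n) (hb0 : ∀ n, 0 ≤ b n) (ha : ∀ n, a n ≤ c₂ * p ^ n)
    (hb : ∀ n, d₁ * s ^ n ≤ b n) (hb' : ∀ n, b n ≤ d₂ * s ^ n) (hη0 : 0 < η) {N : ℕ}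
    (hη : η ≤ p ^ N) :
    d₁ / (c₂ + 1) * (s / p) ^ N ≤ ∑' n, b n / (a n + η) := by
  calc d₁ / (c₂ + 1) * (s / p) ^ N = d₁ * s ^ N / ((c₂ + 1) * p ^ N) := by
        rw [div_pow]; field_simp
    _ ≤ b N / (a N + η) := div_le_div₀ (hb0 N) (hb N) (by linarith [ha0 N])
        (by linarith [ha N])
    _ ≤ ∑' n, b n / (a n + η) :=
        (summable_div_add_of_le_geometric hs0 hs1 ha0 hb0 hb' hη0).le_tsum N
          fun n _ ↦ div_nonneg (hb0 n) (by linarith [ha0 n])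

end GeometricComparison

lemma exp_neg_mul_natCast_succ (γ : ℝ) (n : ℕ) :
    exp (-γ * ((n + 1 : ℕ) : ℝ)) = exp (-γ) * exp (-γ) ^ n := by
  rw [← pow_succ', ← exp_nat_mul]; push_cast; ring_nf

lemma rpow_pow_exp_neg {α : ℝ} (hα : α ≠ 0) (β : ℝ) (N : ℕ) :
    (exp (-α) ^ N) ^ (β / α - 1) = (exp (-β) / exp (-α)) ^ N := by
  rw [← exp_sub, ← exp_nat_mul, ← exp_mul, ← exp_nat_mul]
  congr 1
  field_simp
  ring

lemma div_exp_pow_le_rpow_le {α β η : ℝ} (hα : 0 < α) (hβα : β ≤ α) {N : ℕ}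
    (hη₁ : exp (-α) ^ (N + 1) ≤ η) (hη₂ : η ≤ exp (-α) ^ N) :
    (exp (-β) / exp (-α)) ^ N ≤ η ^ (β / α - 1) ∧
      η ^ (β / α - 1) ≤ (exp (-β) / exp (-α)) ^ (N + 1) := by
  have hγ : β / α - 1 ≤ 0 := by rw [sub_nonpos, div_le_one hα]; exact hβα
  rw [← rpow_pow_exp_neg hα.ne', ← rpow_pow_exp_neg hα.ne']
  exact ⟨rpow_le_rpow_of_nonpos (lt_of_lt_of_le (by positivity) hη₁) hη₂ hγ,
    rpow_le_rpow_of_nonpos (by positivity) hη₁ hγ⟩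

/-- power-law asymptotics of `∑_{n=1}^∞ b_n / (a_n + η)` when
`a_n ≍ e^{-αn}` and `b_n ≍ e^{-βn}` with `0 < β < α`. -/
theorem stmt0 (a b : ℕ → ℝ) (α β : ℝ) (hβ : 0 < β) (hβα : β < α)
    (ha0 : ∀ n : ℕ, 0 ≤ a n) (hb0 : ∀ n : ℕ, 0 ≤ b n)
    (c₁ c₂ d₁ d₂ : ℝ) (hc₁ : 0 < c₁) (hc₂ : 0 < c₂) (hd₁ : 0 < d₁) (hd₂ : 0 < d₂)
    (ha : ∀ n : ℕ, 1 ≤ n → c₁ * Real.exp (-α * n) ≤ a n ∧ a n ≤ c₂ * Real.exp (-α * n))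
    (hb : ∀ n : ℕ, 1 ≤ n → d₁ * Real.exp (-β * n) ≤ b n ∧ b n ≤ d₂ * Real.exp (-β * n)) :
    ∃ C₁ C₂ η₀ : ℝ, 0 < C₁ ∧ 0 < C₂ ∧ 0 < η₀ ∧ ∀ η : ℝ, 0 < η → η < η₀ →
      C₁ * η ^ (β / α - 1) ≤ (∑' n : ℕ, b (n + 1) / (a (n + 1) + η)) ∧
      (∑' n : ℕ, b (n + 1) / (a (n + 1) + η)) ≤ C₂ * η ^ (β / α - 1) := by
  have hα : 0 < α := hβ.trans hβα
  set p := exp (-α)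
  set s := exp (-β)
  have hp : 0 < p := exp_pos _
  have hps : p < s := exp_lt_exp.2 (by linarith)
  have hs1 : s < 1 := exp_lt_one_iff.2 (by linarith)
  have hr : 0 < s / p - 1 := by rw [sub_pos, one_lt_div hp]; exact hps
  have hs : 0 < 1 - s := by linarith
  have ha' (n : ℕ) : c₁ * p * p ^ n ≤ a (n + 1) ∧ a (n + 1) ≤ c₂ * p * p ^ n := by
    simpa only [exp_neg_mul_natCast_succ, mul_assoc] using ha (n + 1) n.succ_pos
  have hb' (n : ℕ) : d₁ * s * s ^ n ≤ b (n + 1) ∧ b (n + 1) ≤ d₂ * s * s ^ n := by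
    simpa only [exp_neg_mul_natCast_succ, mul_assoc] using hb (n + 1) n.succ_pos
  refine ⟨d₁ * s / (c₂ * p + 1) / (s / p),
    d₂ * s / (c₁ * p * (s / p - 1)) + d₂ * s / (p * (1 - s)), 1,
    by positivity, by positivity, one_pos, fun η hη hη1 ↦ ?_⟩
  obtain ⟨N, hN₁, hN₂⟩ := exists_nat_pow_near_of_lt_one hη hη1.le hp (hps.trans hs1)
  obtain ⟨hrpow₁, hrpow₂⟩ := div_exp_pow_le_rpow_le hα hβα.le hN₁.le hN₂
  have hsum₁ := le_tsum_div_add hp (hp.trans hps).le hs1 (fun n ↦ ha0 (n + 1))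
    (fun n ↦ hb0 (n + 1)) (fun n ↦ (ha' n).2) (fun n ↦ (hb' n).1) (fun n ↦ (hb' n).2) hη hN₂
  have hsum₂ := tsum_div_add_le hp hps hs1 (by positivity) (fun n ↦ ha0 (n + 1))
    (fun n ↦ hb0 (n + 1)) (fun n ↦ (ha' n).1) (fun n ↦ (hb' n).2) hN₁.le
  constructor
  · calc d₁ * s / (c₂ * p + 1) / (s / p) * η ^ (β / α - 1)
        ≤ d₁ * s / (c₂ * p + 1) / (s / p) * (s / p) ^ (N + 1) := by gcongr
      _ = d₁ * s / (c₂ * p + 1) * (s / p) ^ N := by rw [pow_succ]; field_simp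
      _ ≤ _ := hsum₁
  · exact hsum₂.trans (by gcongr)
end

section
/- Fix 0 < ρ < r < 1. On the Hardy space of the annulus A_ρ with the orthonormal basis e_n (e_n(ζ) = ζⁿ for n ≥ 0, e_n(ζ) = (ζ/ρ)ⁿ for n < 0), the operator Kf(ζ) = ∫_{Γ_r} p(ζ, τ) f(τ) |dτ| with p(ζ,τ) = 1/(1-ζτ̄) + ρ²/(ζτ̄-ρ²) satisfies K e_n = λ_n e_n for all n ∈ ℤ, where λ_n = 2πr·r^{2n} for n ≥ 0 and λ_n = 2πr·(r/ρ)^{2n} for n < 0. -/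
/-! On the circle `|τ| = r` one has `conj τ = r² / τ`, so that
`p(ζ, τ) = τ / (τ - ζ r²) - τ / (τ - ζ r² / ρ²)`. The condition `ρ² < |ζ| r < 1` puts the first
pole inside `Γ_r` and the second outside, and for `n ≥ 0` Cauchy's formula gives
`K e_n(ζ) = 2π r (ζ r²)ⁿ`. For `n < 0` use the inversion `z ↦ ρ / z` of the annulus: it leaves `p`
invariant, exchanges `e_n` and `e_{-n}`, maps `Γ_r` onto `Γ_{ρ/r}` and preserves the condition
`ρ² < |ζ| r < 1`, which reduces this case to the first one with `r` replaced by `ρ / r`. -/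

/-- Orthonormal basis functions of the Hardy space of the annulus `A_ρ`. -/
noncomputable def eAnn (ρ : ℝ) (n : ℤ) (ζ : ℂ) : ℂ :=
  if 0 ≤ n then ζ ^ n else (ζ / (ρ : ℂ)) ^ n

/-- The reproducing kernel of `H²(A_ρ)`. -/
noncomputable def pAnn (ρ : ℝ) (ζ τ : ℂ) : ℂ :=
  1 / (1 - ζ * (starRingEnd ℂ) τ) + (ρ : ℂ) ^ 2 / (ζ * (starRingEnd ℂ) τ - (ρ : ℂ) ^ 2)

/-- Eigenvalues: `λ_n = 2πr·r^{2n}` for `n ≥ 0`, `λ_n = 2πr·(r/ρ)^{2n}` for `n < 0`. -/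
noncomputable def lamAnn (ρ r : ℝ) (n : ℤ) : ℝ :=
  if 0 ≤ n then 2 * Real.pi * r * r ^ (2 * n) else 2 * Real.pi * r * (r / ρ) ^ (2 * n)

open Complex Metric Real

theorem integral_circleMap_mul_eq_circleIntegral (R : ℝ) (f : ℂ → ℂ) :
    ∫ t in (0:ℝ)..2 * π, circleMap 0 R t * f (circleMap 0 R t) = I⁻¹ * ∮ z in C(0, R), f z := by
  simp only [circleIntegral, deriv_circleMap, smul_eq_mul, ← intervalIntegral.integral_const_mul]
  congr 1 with t
  field_simp

theorem integral_circleMap_mul_sub_inv_sub_sub_inv {R : ℝ} {a b : ℂ} {f : ℂ → ℂ}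
    (ha : ‖a‖ < R) (hb : R < ‖b‖) (hf : DifferentiableOn ℂ f (closedBall 0 R)) :
    ∫ t in (0:ℝ)..2 * π, circleMap 0 R t *
        (((circleMap 0 R t - a)⁻¹ - (circleMap 0 R t - b)⁻¹) * f (circleMap 0 R t)) =
      2 * π * f a := by
  have hab : a - b ≠ 0 := sub_ne_zero.2 fun h => by rw [h] at ha; linarith
  have hb_notMem : b ∉ closedBall (0:ℂ) R := by simpa using hb
  -- `(z - a)⁻¹ - (z - b)⁻¹ = (z - a)⁻¹ • g z` with `g` holomorphic on the disc and `g a = f a`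
  set g : ℂ → ℂ := fun z => (a - b) * ((z - b)⁻¹ * f z)
  have hg : DifferentiableOn ℂ g (closedBall 0 R) := fun z hz =>
    ((((differentiableWithinAt_id.sub_const b).inv
      (sub_ne_zero.2 fun h => hb_notMem (h ▸ hz))).mul (hf z hz)).const_mul _)
  have hga : g a = f a := by simp only [g]; field_simp
  have hcauchy := hg.circleIntegral_sub_inv_smul (w := a) (by simpa using ha)
  calc _ = ∫ t in (0:ℝ)..2 * π,
          circleMap 0 R t * ((circleMap 0 R t - a)⁻¹ * g (circleMap 0 R t)) := by
        refine intervalIntegral.integral_congr fun t _ => ?_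
        have hz : ‖circleMap 0 R t‖ = R := by
          rw [norm_circleMap_zero, abs_of_pos ((norm_nonneg a).trans_lt ha)]
        have hza : circleMap 0 R t - a ≠ 0 := sub_ne_zero.2 fun h => by rw [h] at hz; linarith
        have hzb : circleMap 0 R t - b ≠ 0 := sub_ne_zero.2 fun h => by rw [h] at hz; linarith
        simp only [g]
        field_simp
        ring
    _ = I⁻¹ * ((2 * π * I) * g a) := by
        rw [integral_circleMap_mul_eq_circleIntegral _ fun z => (z - a)⁻¹ * g z]
        simpa only [smul_eq_mul] using congrArg (I⁻¹ * ·) hcauchy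
    _ = 2 * π * f a := by
        rw [hga]
        field_simp

theorem pAnn_eq_of_norm_eq {ρ r : ℝ} {ζ τ : ℂ} (hρ : ρ ≠ 0) (hτ : ‖τ‖ = r) (hτ0 : τ ≠ 0)
    (ha : τ ≠ ζ * r ^ 2) (hb : τ ≠ ζ * r ^ 2 / ρ ^ 2) :
    pAnn ρ ζ τ = τ * ((τ - ζ * r ^ 2)⁻¹ - (τ - ζ * r ^ 2 / ρ ^ 2)⁻¹) := by
  have hconj : (starRingEnd ℂ) τ = r ^ 2 / τ := by
    rw [eq_div_iff hτ0, mul_comm, mul_conj', hτ]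
  have ha' : τ - ζ * r ^ 2 ≠ 0 := sub_ne_zero.2 ha
  have hb' : τ - ζ * r ^ 2 / ρ ^ 2 ≠ 0 := sub_ne_zero.2 hb
  have hρ' : (ρ : ℂ) ≠ 0 := ofReal_ne_zero.2 hρ
  have e1 : 1 - ζ * (r ^ 2 / τ) = (τ - ζ * r ^ 2) / τ := by field_simp
  have e2 : ζ * (r ^ 2 / τ) - ρ ^ 2 = -(ρ ^ 2 * (τ - ζ * r ^ 2 / ρ ^ 2)) / τ := by
    field_simp
    ring
  rw [pAnn, hconj, e1, e2]
  field_simp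
  ring

noncomputable def annulusKernelOp (ρ r : ℝ) (f : ℂ → ℂ) (ζ : ℂ) : ℂ :=
  ∫ t in (0:ℝ)..2 * π, pAnn ρ ζ (r * exp (I * t)) * f (r * exp (I * t)) * r

theorem annulusKernelOp_eAnn_natCast {ρ r : ℝ} {ζ : ℂ} (hρ : ρ ≠ 0) (hr : 0 < r)
    (hζr : ρ ^ 2 < ‖ζ‖ * r) (hζr1 : ‖ζ‖ * r < 1) (m : ℕ) :
    annulusKernelOp ρ r (eAnn ρ m) ζ = lamAnn ρ r m * eAnn ρ m ζ := by
  have ha : ‖ζ * r ^ 2‖ < r := by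
    rw [norm_mul, norm_pow, norm_real, Real.norm_of_nonneg hr.le]
    nlinarith
  have hb : r < ‖ζ * r ^ 2 / ρ ^ 2‖ := by
    rw [norm_div, norm_mul, norm_pow, norm_pow, norm_real, norm_real, Real.norm_of_nonneg hr.le,
      Real.norm_eq_abs, sq_abs, lt_div_iff₀ (by positivity)]
    nlinarith
  have hintegrand : ∀ t : ℝ, pAnn ρ ζ (r * exp (I * t)) * eAnn ρ m (r * exp (I * t)) * r =
      circleMap 0 r t * (((circleMap 0 r t - ζ * r ^ 2)⁻¹ -
        (circleMap 0 r t - ζ * r ^ 2 / ρ ^ 2)⁻¹) * (r * circleMap 0 r t ^ m)) := by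
    intro t
    have hτ : ‖circleMap 0 r t‖ = r := by rw [norm_circleMap_zero, abs_of_pos hr]
    rw [circleMap_zero, mul_comm (t : ℂ)] at hτ ⊢
    rw [pAnn_eq_of_norm_eq hρ hτ ?_ ?_ ?_, eAnn, if_pos (Int.natCast_nonneg m), zpow_natCast]
    · ring
    all_goals rintro h
    · rw [h, norm_zero] at hτ; linarith
    · rw [h] at hτ; linarith
    · rw [h] at hτ; linarith
  rw [annulusKernelOp, intervalIntegral.integral_congr fun t _ => hintegrand t,
    integral_circleMap_mul_sub_inv_sub_sub_inv (f := fun z => r * z ^ m) ha hb (by fun_prop),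
    lamAnn, eAnn, if_pos (Int.natCast_nonneg m), if_pos (Int.natCast_nonneg m),
    show 2 * (m : ℤ) = (2 * m : ℕ) by push_cast; ring, zpow_natCast, zpow_natCast]
  push_cast
  ring

theorem pAnn_div_div {ρ : ℝ} {ζ τ : ℂ} (hρ : ρ ≠ 0) (h1 : ζ * (starRingEnd ℂ) τ ≠ 1)
    (h2 : ζ * (starRingEnd ℂ) τ ≠ ρ ^ 2) :
    pAnn ρ (ρ / ζ) (ρ / τ) = pAnn ρ ζ τ := by
  have hρ' : (ρ : ℂ) ≠ 0 := ofReal_ne_zero.2 hρ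
  have hw : ρ / ζ * (starRingEnd ℂ) (ρ / τ) = ρ ^ 2 / (ζ * (starRingEnd ℂ) τ) := by
    rw [map_div₀, conj_ofReal, div_mul_div_comm, sq]
  rw [pAnn, pAnn, hw]
  generalize ζ * (starRingEnd ℂ) τ = w at h1 h2
  rcases eq_or_ne w 0 with rfl | hw0
  · simp
  have h1' : 1 - w ≠ 0 := sub_ne_zero.2 (Ne.symm h1)
  have h2' : w - ρ ^ 2 ≠ 0 := sub_ne_zero.2 h2
  have e1 : 1 - ρ ^ 2 / w = -(ρ ^ 2 - w) / w := by field_simp; ring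
  have e2 : ρ ^ 2 / w - ρ ^ 2 = ρ ^ 2 * (1 - w) / w := by field_simp
  rw [e1, e2]
  field_simp
  ring

theorem eAnn_div {ρ : ℝ} (hρ : ρ ≠ 0) (n : ℤ) (z : ℂ) : eAnn ρ n (ρ / z) = eAnn ρ (-n) z := by
  have hρ' : (ρ : ℂ) ≠ 0 := ofReal_ne_zero.2 hρ
  rcases lt_trichotomy n 0 with hn | rfl | hn
  · rw [eAnn, eAnn, if_neg hn.not_ge, if_pos (by omega), div_div_cancel_left' hρ', inv_zpow']
  · simp [eAnn]
  · rw [eAnn, eAnn, if_pos hn.le, if_neg (by omega), zpow_neg, ← inv_zpow, inv_div]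

theorem lamAnn_neg_natCast {ρ r : ℝ} (hρ : ρ ≠ 0) (hr : r ≠ 0) (m : ℕ) :
    lamAnn ρ r (-m) = r ^ 2 / ρ * lamAnn ρ (ρ / r) m := by
  rcases Nat.eq_zero_or_pos m with rfl | hm
  · simp [lamAnn]
    field_simp
  · rw [lamAnn, lamAnn, if_neg (by omega), if_pos (by omega), mul_neg, zpow_neg, ← inv_zpow,
      inv_div]
    field_simp

theorem integral_comp_exp_inv {E : Type*} [NormedAddCommGroup E] [NormedSpace ℝ E] (f : ℂ → E) :
    ∫ t in (0:ℝ)..2 * π, f (exp (I * t))⁻¹ = ∫ t in (0:ℝ)..2 * π, f (exp (I * t)) := by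
  have hexp : ∀ t : ℝ, (exp (I * t))⁻¹ = exp (I * ↑(2 * π - t)) := fun t => by
    rw [show I * ↑(2 * π - t) = 2 * π * I + -(I * t) by push_cast; ring, Complex.exp_add,
      exp_two_pi_mul_I, one_mul, Complex.exp_neg]
  simp only [hexp]
  rw [intervalIntegral.integral_comp_sub_left (fun t => f (exp (I * t))), sub_self, sub_zero]

theorem annulusKernelOp_eq_div {ρ r : ℝ} {ζ : ℂ} (hρ : ρ ≠ 0) (hr : 0 < r) (h1 : ‖ζ‖ * r ≠ 1)
    (h2 : ‖ζ‖ * r ≠ ρ ^ 2) (f : ℂ → ℂ) :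
    annulusKernelOp ρ r f ζ =
      r ^ 2 / ρ * annulusKernelOp ρ (ρ / r) (fun z => f (ρ / z)) (ρ / ζ) := by
  have hρ' : (ρ : ℂ) ≠ 0 := ofReal_ne_zero.2 hρ
  have hr' : (r : ℂ) ≠ 0 := ofReal_ne_zero.2 hr.ne'
  rw [annulusKernelOp, annulusKernelOp, ← integral_comp_exp_inv fun u =>
    pAnn ρ (ρ / ζ) (((ρ / r : ℝ) : ℂ) * u) * f (ρ / (((ρ / r : ℝ) : ℂ) * u)) * ((ρ / r : ℝ) : ℂ),
    ← intervalIntegral.integral_const_mul]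
  refine intervalIntegral.integral_congr fun t _ => ?_
  set τ : ℂ := r * exp (I * t)
  have hτ : ‖τ‖ = r := by simp [τ, norm_exp_I_mul_ofReal, abs_of_pos hr]
  have hinv : ((ρ / r : ℝ) : ℂ) * (exp (I * t))⁻¹ = ρ / τ := by
    simp only [τ, ofReal_div]
    field_simp
  rw [hinv, div_div_cancel₀ hρ',
    pAnn_div_div hρ (fun h => h1 (by simpa [hτ] using congrArg norm h))
      (fun h => h2 (by simpa [hτ] using congrArg norm h)), ofReal_div]
  field_simp

theorem annulusKernelOp_eAnn_neg_natCast {ρ r : ℝ} {ζ : ℂ} (hρ : 0 < ρ) (hr : 0 < r)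
    (hζr : ρ ^ 2 < ‖ζ‖ * r) (hζr1 : ‖ζ‖ * r < 1) (m : ℕ) :
    annulusKernelOp ρ r (eAnn ρ (-m)) ζ = lamAnn ρ r (-m) * eAnn ρ (-m) ζ := by
  have hζr0 : 0 < ‖ζ‖ * r := (pow_pos hρ 2).trans hζr
  have hnorm : ‖(ρ : ℂ) / ζ‖ * (ρ / r) = ρ ^ 2 / (‖ζ‖ * r) := by
    rw [norm_div, norm_real, Real.norm_of_nonneg hρ.le]
    ring
  have hζr' : ρ ^ 2 < ‖(ρ : ℂ) / ζ‖ * (ρ / r) := by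
    rw [hnorm, lt_div_iff₀ hζr0]
    nlinarith [pow_pos hρ 2]
  have hζr1' : ‖(ρ : ℂ) / ζ‖ * (ρ / r) < 1 := by
    rwa [hnorm, div_lt_one hζr0]
  have heAnn : (fun z => eAnn ρ (-m) (ρ / z)) = eAnn ρ m := by
    ext z
    rw [eAnn_div hρ.ne', neg_neg]
  rw [annulusKernelOp_eq_div hρ.ne' hr hζr1.ne hζr.ne', heAnn,
    annulusKernelOp_eAnn_natCast hρ.ne' (by positivity) hζr' hζr1' m,
    lamAnn_neg_natCast hρ.ne' hr.ne', eAnn_div hρ.ne']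
  push_cast
  ring

/-- the integral operator `Kf(ζ) = ∫_{Γ_r} p(ζ,τ) f(τ) |dτ|` on the
Hardy space of `A_ρ` satisfies `K e_n = λ_n e_n` for all `n ∈ ℤ`. -/
theorem stmt11 (ρ r : ℝ) (hρ : 0 < ρ) (hρr : ρ < r) (hr : r < 1) (n : ℤ) (ζ : ℂ)
    (hζ : ρ < ‖ζ‖) (hζ1 : ‖ζ‖ < 1) :
    (∫ t in (0:ℝ)..(2 * Real.pi),
        pAnn ρ ζ ((r : ℂ) * Complex.exp (Complex.I * (t : ℂ))) *
          eAnn ρ n ((r : ℂ) * Complex.exp (Complex.I * (t : ℂ))) * (r : ℂ))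
      = (lamAnn ρ r n : ℂ) * eAnn ρ n ζ := by
  change annulusKernelOp ρ r (eAnn ρ n) ζ = _
  have hr0 : 0 < r := hρ.trans hρr
  have hζr : ρ ^ 2 < ‖ζ‖ * r := by nlinarith
  have hζr1 : ‖ζ‖ * r < 1 := by nlinarith [norm_nonneg ζ]
  obtain ⟨m, rfl | rfl⟩ := Int.eq_nat_or_neg n
  · exact annulusKernelOp_eAnn_natCast hρ.ne' hr0 hζr hζr1 m
  · exact annulusKernelOp_eAnn_neg_natCast hρ hr0 hζr hζr1 m
end

section
/- (Annulus extrapolation bound) Let 0 < ρ < r < 1, A_ρ = {ρ < |ζ| < 1}, Γ = {|ζ| = r}, and z ∈ A_ρ with |z| ≠ r. Define γ(z) = ln|z|/ln r if r < |z| < 1, and γ(z) = ln(|z|/ρ)/ln(r/ρ) if ρ < |z| < r. Then there is a constant C > 0 such that for every ε > 0 and every f analytic on A_ρ with ‖f‖_{H²(A_ρ)} ≤ 1 and ‖f‖_{L²(Γ)} ≤ ε, one has |f(z)| ≤ C ε^{γ(z)}. -/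
/-!
By the Cauchy formula on two circles `|w| = s₁ < |z| < s₂` inside the annulus, `2πi f(z)` splits
into an outer and an inner kernel integral. Expanding the Cauchy kernel geometrically to order `N`
(resp. `M`) produces the Laurent coefficients of `f`, which are circle integrals independent of
the radius: evaluated on `Γ` they are `O(ε r^{-n})` (resp. `O(ε r^m)`). The remainders are
controlled by the `H²` norm alone on circles tending to `|w| = 1` (resp. `|w| = ρ`), giving
`O(|z|^N)` (resp. `O((ρ/|z|)^M)`). On the side of `Γ` not containing `z` the coefficient sum is
a convergent geometric series and `N` (resp. `M`) may be taken large; on the other side one cuts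
where `r^N` (resp. `(ρ/r)^M`) first drops below `ε`, which balances both contributions at `ε^γ`.
-/

open Complex Metric Set Real

/-- The extrapolation exponent for the annulus `A_ρ` with data on the circle `Γ_r`. -/
noncomputable def gammaAnn (ρ r : ℝ) (z : ℂ) : ℝ :=
  if r < ‖z‖ then Real.log (‖z‖) / Real.log r
  else Real.log (‖z‖ / ρ) / Real.log (r / ρ)

def annulus (a b : ℝ) : Set ℂ := {w | a < ‖w‖ ∧ ‖w‖ < b}

/-- `‖f‖²_{L²(Γ_s)}` for arc length on `Γ_s = {|w| = s}`. -/
noncomputable def circleNormSq (f : ℂ → ℂ) (s : ℝ) : ℝ :=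
  ∫ θ in (0:ℝ)..(2 * π), ‖f ((s : ℂ) * Complex.exp (I * (θ : ℂ)))‖ ^ 2 * s

theorem circleNormSq_eq (f : ℂ → ℂ) (s : ℝ) :
    circleNormSq f s = (∫ θ in (0:ℝ)..(2 * π), ‖f (circleMap 0 s θ)‖ ^ 2) * s := by
  simp only [circleNormSq, circleMap_zero, mul_comm I, intervalIntegral.integral_mul_const]

theorem sq_intervalIntegral_le {h : ℝ → ℝ} {a b : ℝ} (hab : a ≤ b)
    (hh : IntervalIntegrable h MeasureTheory.volume a b)
    (hh2 : IntervalIntegrable (fun x ↦ h x ^ 2) MeasureTheory.volume a b) :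
    (∫ x in a..b, h x) ^ 2 ≤ (b - a) * ∫ x in a..b, h x ^ 2 := by
  set I := ∫ x in a..b, h x
  set J := ∫ x in a..b, h x ^ 2
  -- integrate `2 c h ≤ h² + c²` and take for `c` the mean value of `h`
  have key : ∀ c : ℝ, 2 * c * I ≤ J + (b - a) * c ^ 2 := by
    intro c
    have := intervalIntegral.integral_mono_on (g := fun x ↦ h x ^ 2 + c ^ 2) hab
      (hh.const_mul (2 * c)) (hh2.add intervalIntegrable_const)
      fun x _ ↦ by nlinarith [sq_nonneg (h x - c)]
    simpa [I, J, intervalIntegral.integral_const_mul, intervalIntegral.integral_add hh2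
      intervalIntegrable_const, mul_assoc] using this
  rcases hab.eq_or_lt with rfl | hab
  · simp [I]
  have := key (I / (b - a))
  have hba : 0 < b - a := sub_pos.2 hab
  field_simp at this
  nlinarith

theorem norm_circleIntegral_mul_le {f g : ℂ → ℂ} {s c : ℝ} (hs : 0 ≤ s)
    (hf : ContinuousOn f (sphere 0 s)) (hg : ∀ w ∈ sphere (0:ℂ) s, ‖g w‖ ≤ c) :
    ‖∮ w in C(0, s), g w * f w‖ ≤ c * √(2 * π * s) * √(circleNormSq f s) := by
  have hc : 0 ≤ c := (norm_nonneg _).trans (hg _ (circleMap_mem_sphere 0 hs 0))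
  set F : ℝ → ℝ := fun θ ↦ ‖f (circleMap 0 s θ)‖
  have hF : Continuous F :=
    (hf.comp_continuous (continuous_circleMap 0 s) (circleMap_mem_sphere 0 hs)).norm
  have hCS : ∫ θ in (0:ℝ)..(2 * π), F θ ≤ √(2 * π * ∫ θ in (0:ℝ)..(2 * π), F θ ^ 2) := by
    refine Real.le_sqrt_of_sq_le ?_
    simpa using sq_intervalIntegral_le (a := 0) (b := 2 * π) (by positivity)
      (hF.intervalIntegrable _ _) ((hF.pow 2).intervalIntegrable _ _)
  calc ‖∮ w in C(0, s), g w * f w‖ ≤ ∫ θ in (0:ℝ)..(2 * π), c * s * F θ := by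
        refine intervalIntegral.norm_integral_le_of_norm_le (by positivity)
          (Filter.Eventually.of_forall fun θ _ ↦ ?_) ((hF.const_mul _).intervalIntegrable _ _)
        rw [norm_smul, deriv_circleMap, norm_mul, norm_mul, norm_circleMap_zero, norm_I,
          abs_of_nonneg hs]
        have := hg _ (circleMap_mem_sphere 0 hs θ)
        simp only [F]
        nlinarith [mul_le_mul_of_nonneg_right this
          (mul_nonneg hs (norm_nonneg (f (circleMap 0 s θ))))]
    _ = c * s * ∫ θ in (0:ℝ)..(2 * π), F θ := intervalIntegral.integral_const_mul _ _
    _ ≤ c * s * √(2 * π * ∫ θ in (0:ℝ)..(2 * π), F θ ^ 2) := by gcongr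
    _ = c * √(2 * π * s) * √(circleNormSq f s) := by
        have hnorm : circleNormSq f s = s * ∫ θ in (0:ℝ)..(2 * π), F θ ^ 2 := by
          rw [circleNormSq_eq, mul_comm]
        rw [hnorm, mul_assoc c (√_), ← Real.sqrt_mul (by positivity),
          show 2 * π * s * (s * ∫ θ in (0:ℝ)..(2 * π), F θ ^ 2)
            = s ^ 2 * (2 * π * ∫ θ in (0:ℝ)..(2 * π), F θ ^ 2) by ring,
          Real.sqrt_mul (sq_nonneg s), Real.sqrt_sq hs, mul_assoc]

theorem isOpen_annulus (a b : ℝ) : IsOpen (annulus a b) :=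
  isOpen_Ioo.preimage continuous_norm

theorem sphere_subset_annulus {a b s : ℝ} (hs : s ∈ Ioo a b) : sphere (0:ℂ) s ⊆ annulus a b :=
  fun w hw ↦ by rw [mem_sphere_zero_iff_norm] at hw; exact ⟨hw ▸ hs.1, hw ▸ hs.2⟩

theorem circleIntegral_eq_of_differentiableOn_annulus {E : Type*} [NormedAddCommGroup E]
    [NormedSpace ℂ E] {a b s₁ s₂ : ℝ} {g : ℂ → E} (ha : 0 ≤ a)
    (hg : DifferentiableOn ℂ g (annulus a b)) (h₁ : s₁ ∈ Ioo a b) (h₂ : s₂ ∈ Ioo a b) :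
    (∮ w in C(0, s₁), g w) = ∮ w in C(0, s₂), g w := by
  wlog h : s₁ ≤ s₂ generalizing s₁ s₂
  · exact (this h₂ h₁ (le_of_not_ge h)).symm
  have hsub : closedBall (0:ℂ) s₂ \ ball 0 s₁ ⊆ annulus a b := fun w ⟨hw₂, hw₁⟩ ↦
    ⟨h₁.1.trans_le (by simpa using hw₁), (mem_closedBall_zero_iff.1 hw₂).trans_lt h₂.2⟩
  refine (circleIntegral_eq_of_differentiable_on_annulus_off_countable (ha.trans_lt h₁.1) h
    countable_empty (hg.continuousOn.mono hsub) fun w hw ↦ ?_).symm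
  exact hg.differentiableAt ((isOpen_annulus a b).mem_nhds
    (hsub ⟨ball_subset_closedBall hw.1.1, fun hb ↦ hw.1.2 (ball_subset_closedBall hb)⟩))

theorem circleIntegral_dslope {f : ℂ → ℂ} {z : ℂ} {s : ℝ} (hs : 0 ≤ s)
    (hf : ContinuousOn f (sphere 0 s)) (hzs : ‖z‖ ≠ s) :
    (∮ w in C(0, s), dslope f z w)
      = (∮ w in C(0, s), (w - z)⁻¹ * f w) - (∮ w in C(0, s), (w - z)⁻¹) * f z := by
  have hwz : ∀ w ∈ sphere (0:ℂ) s, w - z ≠ 0 := fun w hw h ↦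
    hzs (by rw [← sub_eq_zero.1 h]; simpa using hw)
  have hinv : ContinuousOn (fun w ↦ (w - z)⁻¹) (sphere (0:ℂ) s) :=
    (continuousOn_id.sub continuousOn_const).inv₀ hwz
  have hconst : (∮ w in C(0, s), (w - z)⁻¹) * f z = ∮ w in C(0, s), (w - z)⁻¹ * f z := by
    simpa using (circleIntegral.integral_smul_const (fun w ↦ (w - z)⁻¹) (f z) 0 s).symm
  rw [hconst, ← circleIntegral.integral_sub (f := fun w ↦ (w - z)⁻¹ * f w)
    (g := fun w ↦ (w - z)⁻¹ * f z) ((hinv.mul hf).circleIntegrable hs)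
    ((hinv.mul continuousOn_const).circleIntegrable hs)]
  refine circleIntegral.integral_congr hs fun w hw ↦ ?_
  simp only [dslope_of_ne f (sub_ne_zero.1 (hwz w hw)), slope_def_field]
  field_simp

theorem circleIntegral_sub_inv_of_lt_norm {z : ℂ} {s : ℝ} (hs : 0 ≤ s) (hsz : s < ‖z‖) :
    (∮ w in C(0, s), (w - z)⁻¹) = 0 := by
  have hwz : ∀ w ∈ closedBall (0:ℂ) s, w - z ≠ 0 := fun w hw h ↦ by
    rw [sub_eq_zero.1 h, mem_closedBall_zero_iff] at hw; linarith
  exact circleIntegral_eq_zero_of_differentiable_on_off_countable hs countable_empty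
    ((continuousOn_id.sub continuousOn_const).inv₀ hwz)
    fun w hw ↦ (DifferentiableAt.inv (by fun_prop) (hwz w (ball_subset_closedBall hw.1)))

theorem circleIntegral_sub_inv_mul_sub_circleIntegral_sub_inv_mul {a b s₁ s₂ : ℝ} {f : ℂ → ℂ}
    {z : ℂ} (ha : 0 ≤ a) (hf : DifferentiableOn ℂ f (annulus a b)) (h₁ : a < s₁)
    (h₁z : s₁ < ‖z‖) (hz₂ : ‖z‖ < s₂) (h₂ : s₂ < b) :
    (∮ w in C(0, s₂), (w - z)⁻¹ * f w) - (∮ w in C(0, s₁), (w - z)⁻¹ * f w)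
      = 2 * π * I * f z := by
  have hs₁ : s₁ ∈ Ioo a b := ⟨h₁, (h₁z.trans hz₂).trans h₂⟩
  have hs₂ : s₂ ∈ Ioo a b := ⟨h₁.trans (h₁z.trans hz₂), h₂⟩
  have h := circleIntegral_eq_of_differentiableOn_annulus ha
    ((differentiableOn_dslope ((isOpen_annulus a b).mem_nhds ⟨h₁.trans h₁z, hz₂.trans h₂⟩)).2 hf)
    hs₂ hs₁
  rw [circleIntegral_dslope (ha.trans hs₂.1.le)
      (hf.continuousOn.mono (sphere_subset_annulus hs₂)) hz₂.ne,
    circleIntegral_dslope (ha.trans hs₁.1.le)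
      (hf.continuousOn.mono (sphere_subset_annulus hs₁)) h₁z.ne',
    circleIntegral.integral_sub_inv_of_mem_ball (mem_ball_zero_iff.2 hz₂),
    circleIntegral_sub_inv_of_lt_norm (ha.trans hs₁.1.le) h₁z] at h
  linear_combination h

theorem inv_sub_eq_sum_add {z w : ℂ} (hw : w ≠ 0) (hwz : w ≠ z) (N : ℕ) :
    (w - z)⁻¹ = ∑ n ∈ Finset.range N, z ^ n * (w ^ (n + 1))⁻¹ + (z / w) ^ N * (w - z)⁻¹ := by
  have hsub : w - z ≠ 0 := sub_ne_zero.2 hwz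
  induction N with
  | zero => simp
  | succ N ih =>
    conv_lhs => rw [ih]
    rw [Finset.sum_range_succ, add_assoc]
    congr 1
    rw [div_pow, div_pow]
    field_simp
    ring

theorem norm_circleIntegral_le_sum_add {ι : Type*} (S : Finset ι) {c : ℂ} {s : ℝ} (hs : 0 ≤ s)
    {h R : ℂ → ℂ} {e : ι → ℂ → ℂ} {a : ι → ℂ} (he : ∀ i ∈ S, ContinuousOn (e i) (sphere c s))
    (hR : ContinuousOn R (sphere c s))
    (heq : EqOn h (fun w ↦ ∑ i ∈ S, a i * e i w + R w) (sphere c s)) :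
    ‖∮ w in C(c, s), h w‖
      ≤ ∑ i ∈ S, ‖a i‖ * ‖∮ w in C(c, s), e i w‖ + ‖∮ w in C(c, s), R w‖ := by
  have hae : ∀ i ∈ S, ContinuousOn (fun w ↦ a i * e i w) (sphere c s) :=
    fun i hi ↦ continuousOn_const.mul (he i hi)
  rw [circleIntegral.integral_congr hs heq, circleIntegral.integral_add
    (f := fun w ↦ ∑ i ∈ S, a i * e i w)
    ((continuousOn_finsetSum S hae).circleIntegrable hs) (hR.circleIntegrable hs),
    circleIntegral.integral_fun_sum fun i hi ↦ (hae i hi).circleIntegrable hs]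
  refine (norm_add_le _ _).trans ?_
  gcongr
  refine (norm_sum_le _ _).trans_eq ?_
  simp only [circleIntegral.integral_const_mul, norm_mul]

section bounds

variable {a b r ε : ℝ} {f : ℂ → ℂ}

theorem norm_circleIntegral_mul_le_of_annulus {g : ℂ → ℂ} {s c : ℝ} (ha : 0 ≤ a)
    (hf : DifferentiableOn ℂ f (annulus a b)) (hg : DifferentiableOn ℂ g (annulus a b))
    (hr : r ∈ Ioo a b) (hs : s ∈ Ioo a b) (hgr : ∀ w ∈ sphere (0:ℂ) r, ‖g w‖ ≤ c)
    (hε : 0 ≤ ε) (hΓ : circleNormSq f r ≤ ε ^ 2) :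
    ‖∮ w in C(0, s), g w * f w‖ ≤ c * √(2 * π * r) * ε := by
  have hr0 : 0 ≤ r := ha.trans hr.1.le
  have hc : 0 ≤ c := (norm_nonneg _).trans (hgr _ (circleMap_mem_sphere 0 hr0 0))
  rw [circleIntegral_eq_of_differentiableOn_annulus (g := fun w ↦ g w * f w) ha (hg.mul hf) hs hr]
  refine (norm_circleIntegral_mul_le hr0 (hf.continuousOn.mono (sphere_subset_annulus hr))
    hgr).trans ?_
  gcongr
  exact (Real.sqrt_le_sqrt hΓ).trans_eq (Real.sqrt_sq hε)

theorem differentiableOn_sub_inv_mul_annulus {z : ℂ} {s t : ℝ}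
    (hf : DifferentiableOn ℂ f (annulus a b)) (hst : Ioo s t ⊆ Ioo a b) (hz : ‖z‖ ∉ Ioo s t) :
    DifferentiableOn ℂ (fun w ↦ (w - z)⁻¹ * f w) (annulus s t) := by
  refine DifferentiableOn.mul (fun w hw ↦ ?_) (hf.mono fun w hw ↦ hst hw)
  exact (DifferentiableAt.inv (by fun_prop)
    (sub_ne_zero.2 fun h ↦ hz (by rw [← h]; exact hw))).differentiableWithinAt

theorem norm_circleIntegral_outer_remainder_le {z : ℂ} {σ : ℝ}
    (hf : ContinuousOn f (sphere 0 σ)) (hzσ : ‖z‖ < σ) (N : ℕ) :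
    ‖∮ w in C(0, σ), (z / w) ^ N * (w - z)⁻¹ * f w‖
      ≤ √(2 * π * σ) / (σ - ‖z‖) * (‖z‖ / σ) ^ N * √(circleNormSq f σ) := by
  have hσ : 0 < σ := (norm_nonneg z).trans_lt hzσ
  refine (norm_circleIntegral_mul_le hσ.le hf
    (c := (‖z‖ / σ) ^ N * (σ - ‖z‖)⁻¹) fun w hw ↦ ?_).trans_eq (by ring)
  rw [mem_sphere_zero_iff_norm] at hw
  rw [norm_mul, norm_pow, norm_div, norm_inv, hw]
  refine mul_le_mul_of_nonneg_left (inv_anti₀ (sub_pos.2 hzσ) ?_) (by positivity)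
  simpa [hw] using norm_sub_norm_le w z

theorem norm_circleIntegral_inner_remainder_le {z : ℂ} {σ : ℝ}
    (hf : ContinuousOn f (sphere 0 σ)) (hσ : 0 ≤ σ) (hσz : σ < ‖z‖) (M : ℕ) :
    ‖∮ w in C(0, σ), (w / z) ^ M * (w - z)⁻¹ * f w‖
      ≤ √(2 * π * σ) / (‖z‖ - σ) * (σ / ‖z‖) ^ M * √(circleNormSq f σ) := by
  refine (norm_circleIntegral_mul_le hσ hf
    (c := (σ / ‖z‖) ^ M * (‖z‖ - σ)⁻¹) fun w hw ↦ ?_).trans_eq (by ring)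
  rw [mem_sphere_zero_iff_norm] at hw
  rw [norm_mul, norm_pow, norm_div, norm_inv, hw]
  refine mul_le_mul_of_nonneg_left (inv_anti₀ (sub_pos.2 hσz) ?_) (by positivity)
  simpa [hw, norm_sub_rev] using norm_sub_norm_le z w

theorem norm_circleIntegral_sub_inv_mul_le_of_norm_lt {z : ℂ} {σ : ℝ} (ha : 0 ≤ a)
    (hf : DifferentiableOn ℂ f (annulus a b)) (hr : r ∈ Ioo a b) (hε : 0 ≤ ε)
    (hΓ : circleNormSq f r ≤ ε ^ 2) (hσ : σ ∈ Ioo a b) (hzσ : ‖z‖ < σ) (N : ℕ) :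
    ‖∮ w in C(0, σ), (w - z)⁻¹ * f w‖
      ≤ √(2 * π * r) / r * (ε * ∑ n ∈ Finset.range N, (‖z‖ / r) ^ n)
        + √(2 * π * σ) / (σ - ‖z‖) * (‖z‖ / σ) ^ N * √(circleNormSq f σ) := by
  have hσ0 : 0 < σ := (norm_nonneg z).trans_lt hzσ
  have hw0 : ∀ w ∈ sphere (0:ℂ) σ, w ≠ 0 := fun w hw ↦ ne_zero_of_mem_sphere hσ0.ne' ⟨w, hw⟩
  have hwz : ∀ w ∈ sphere (0:ℂ) σ, w - z ≠ 0 := fun w hw h ↦ by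
    rw [sub_eq_zero.1 h, mem_sphere_zero_iff_norm] at hw; exact hzσ.ne hw
  have hfσ : ContinuousOn f (sphere 0 σ) := hf.continuousOn.mono (sphere_subset_annulus hσ)
  have hpow : ∀ n : ℕ, DifferentiableOn ℂ (fun w : ℂ ↦ (w ^ (n + 1))⁻¹) (annulus a b) :=
    fun n ↦ (differentiableOn_pow _).inv fun w hw ↦
      pow_ne_zero _ (norm_pos_iff.1 (ha.trans_lt hw.1))
  refine (norm_circleIntegral_le_sum_add (Finset.range N) hσ0.le (a := fun n ↦ z ^ n)
    (e := fun n w ↦ (w ^ (n + 1))⁻¹ * f w) (R := fun w ↦ (z / w) ^ N * (w - z)⁻¹ * f w)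
    (fun n _ ↦ ((continuousOn_pow _).inv₀ fun w hw ↦ pow_ne_zero _ (hw0 w hw)).mul hfσ)
    ((((continuousOn_const.div continuousOn_id hw0).pow N).mul
      ((continuousOn_id.sub continuousOn_const).inv₀ hwz)).mul hfσ)
    fun w hw ↦ ?_).trans ?_
  · conv_lhs => rw [inv_sub_eq_sum_add (hw0 w hw) (sub_ne_zero.1 (hwz w hw)) N]
    simp only [add_mul, Finset.sum_mul, mul_assoc]
  gcongr ?_ + ?_
  · calc ∑ n ∈ Finset.range N, ‖z ^ n‖ * ‖∮ w in C(0, σ), (w ^ (n + 1))⁻¹ * f w‖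
        ≤ ∑ n ∈ Finset.range N, ‖z‖ ^ n * ((r ^ (n + 1))⁻¹ * √(2 * π * r) * ε) := by
          refine Finset.sum_le_sum fun n _ ↦ ?_
          rw [norm_pow]
          gcongr
          exact norm_circleIntegral_mul_le_of_annulus ha hf (hpow n) hr hσ
            (fun w hw ↦ by simp [mem_sphere_zero_iff_norm.1 hw]) hε hΓ
      _ = √(2 * π * r) / r * (ε * ∑ n ∈ Finset.range N, (‖z‖ / r) ^ n) := by
          rw [Finset.mul_sum, Finset.mul_sum]
          refine Finset.sum_congr rfl fun n _ ↦ ?_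
          rw [div_pow]
          field_simp
          ring
  · exact norm_circleIntegral_outer_remainder_le hfσ hzσ N

theorem norm_circleIntegral_sub_inv_mul_le_of_lt_norm {z : ℂ} {σ : ℝ} (ha : 0 ≤ a)
    (hf : DifferentiableOn ℂ f (annulus a b)) (hr : r ∈ Ioo a b) (hε : 0 ≤ ε)
    (hΓ : circleNormSq f r ≤ ε ^ 2) (hσ : σ ∈ Ioo a b) (hσz : σ < ‖z‖) (M : ℕ) :
    ‖∮ w in C(0, σ), (w - z)⁻¹ * f w‖
      ≤ √(2 * π * r) / ‖z‖ * (ε * ∑ m ∈ Finset.range M, (r / ‖z‖) ^ m)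
        + √(2 * π * σ) / (‖z‖ - σ) * (σ / ‖z‖) ^ M * √(circleNormSq f σ) := by
  have hσ0 : 0 < σ := ha.trans_lt hσ.1
  have hz0 : z ≠ 0 := norm_pos_iff.1 (hσ0.trans hσz)
  have hwz : ∀ w ∈ sphere (0:ℂ) σ, w - z ≠ 0 := fun w hw h ↦ by
    rw [sub_eq_zero.1 h, mem_sphere_zero_iff_norm] at hw; exact hσz.ne' hw
  have hfσ : ContinuousOn f (sphere 0 σ) := hf.continuousOn.mono (sphere_subset_annulus hσ)
  refine (norm_circleIntegral_le_sum_add (Finset.range M) hσ0.le (a := fun m ↦ -(z ^ (m + 1))⁻¹)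
    (e := fun m w ↦ w ^ m * f w) (R := fun w ↦ (w / z) ^ M * (w - z)⁻¹ * f w)
    (fun m _ ↦ (continuousOn_pow _).mul hfσ)
    ((((continuousOn_id.div continuousOn_const fun _ _ ↦ hz0).pow M).mul
      ((continuousOn_id.sub continuousOn_const).inv₀ hwz)).mul hfσ)
    fun w hw ↦ ?_).trans ?_
  · have hzw : z ≠ w := fun h ↦ hwz w hw (by rw [h, sub_self])
    conv_lhs => rw [← neg_sub z w, inv_neg, inv_sub_eq_sum_add hz0 hzw M]
    beta_reduce
    rw [← neg_sub z w, inv_neg]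
    simp only [neg_add, add_mul, neg_mul, Finset.sum_mul, ← Finset.sum_neg_distrib, mul_neg]
    congr 1
    exact Finset.sum_congr rfl fun m _ ↦ by ring
  gcongr ?_ + ?_
  · calc ∑ m ∈ Finset.range M, ‖-(z ^ (m + 1))⁻¹‖ * ‖∮ w in C(0, σ), w ^ m * f w‖
        ≤ ∑ m ∈ Finset.range M, (‖z‖ ^ (m + 1))⁻¹ * (r ^ m * √(2 * π * r) * ε) := by
          refine Finset.sum_le_sum fun m _ ↦ ?_
          rw [norm_neg, norm_inv, norm_pow]
          gcongr
          exact norm_circleIntegral_mul_le_of_annulus ha hf (differentiableOn_pow m) hr hσ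
            (fun w hw ↦ by simp [mem_sphere_zero_iff_norm.1 hw]) hε hΓ
      _ = √(2 * π * r) / ‖z‖ * (ε * ∑ m ∈ Finset.range M, (r / ‖z‖) ^ m) := by
          rw [Finset.mul_sum, Finset.mul_sum]
          refine Finset.sum_congr rfl fun m _ ↦ ?_
          rw [div_pow]
          field_simp
          ring
  · exact norm_circleIntegral_inner_remainder_le hfσ hσ0.le hσz M

theorem norm_circleIntegral_sub_inv_mul_le_outer {z : ℂ} {s : ℝ} (ha : 0 ≤ a)
    (hf : DifferentiableOn ℂ f (annulus a b)) (hH : ∀ s, a < s → s < b → circleNormSq f s ≤ 1)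
    (hr : r ∈ Ioo a b) (hε : 0 ≤ ε) (hΓ : circleNormSq f r ≤ ε ^ 2) (hz : a < ‖z‖)
    (hs : s ∈ Ioo ‖z‖ b) (N : ℕ) :
    ‖∮ w in C(0, s), (w - z)⁻¹ * f w‖
      ≤ √(2 * π * r) / r * (ε * ∑ n ∈ Finset.range N, (‖z‖ / r) ^ n)
        + √(2 * π * b) / (b - ‖z‖) * (‖z‖ / b) ^ N := by
  have hzb : ‖z‖ < b := hs.1.trans hs.2
  have hkern := differentiableOn_sub_inv_mul_annulus hf (Ioo_subset_Ioo_left hz.le)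
    (fun h ↦ lt_irrefl _ h.1)
  have key : ∀ σ ∈ Ioo ‖z‖ b, ‖∮ w in C(0, s), (w - z)⁻¹ * f w‖
      ≤ √(2 * π * r) / r * (ε * ∑ n ∈ Finset.range N, (‖z‖ / r) ^ n)
        + √(2 * π * σ) / (σ - ‖z‖) * (‖z‖ / σ) ^ N := by
    intro σ hσ
    have hσA : σ ∈ Ioo a b := ⟨hz.trans hσ.1, hσ.2⟩
    rw [circleIntegral_eq_of_differentiableOn_annulus (norm_nonneg z) hkern hs hσ]
    refine (norm_circleIntegral_sub_inv_mul_le_of_norm_lt ha hf hr hε hΓ hσA hσ.1 N).trans ?_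
    have hσ0 : 0 < σ := ha.trans_lt hσA.1
    have hσz : ‖z‖ < σ := hσ.1
    exact add_le_add le_rfl (mul_le_of_le_one_right (by positivity)
      ((Real.sqrt_le_sqrt (hH σ hσA.1 hσA.2)).trans_eq Real.sqrt_one))
  have hb_mem : b ∈ closure (Ioo ‖z‖ b) := by
    rw [closure_Ioo hzb.ne]
    exact right_mem_Icc.2 hzb.le
  refine ContinuousWithinAt.closure_le hb_mem continuousWithinAt_const
    (ContinuousAt.continuousWithinAt ?_) key
  have hb0 : b ≠ 0 := ((norm_nonneg z).trans_lt hzb).ne'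
  have hbz : b - ‖z‖ ≠ 0 := (sub_pos.2 hzb).ne'
  fun_prop (disch := assumption)

theorem norm_circleIntegral_sub_inv_mul_le_inner {z : ℂ} {s : ℝ} (ha : 0 ≤ a)
    (hf : DifferentiableOn ℂ f (annulus a b)) (hH : ∀ s, a < s → s < b → circleNormSq f s ≤ 1)
    (hr : r ∈ Ioo a b) (hε : 0 ≤ ε) (hΓ : circleNormSq f r ≤ ε ^ 2) (hz : ‖z‖ < b)
    (hs : s ∈ Ioo a ‖z‖) (M : ℕ) :
    ‖∮ w in C(0, s), (w - z)⁻¹ * f w‖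
      ≤ √(2 * π * r) / ‖z‖ * (ε * ∑ m ∈ Finset.range M, (r / ‖z‖) ^ m)
        + √(2 * π * a) / (‖z‖ - a) * (a / ‖z‖) ^ M := by
  have haz : a < ‖z‖ := hs.1.trans hs.2
  have hkern := differentiableOn_sub_inv_mul_annulus hf (Ioo_subset_Ioo_right hz.le)
    (fun h ↦ lt_irrefl _ h.2)
  have key : ∀ σ ∈ Ioo a ‖z‖, ‖∮ w in C(0, s), (w - z)⁻¹ * f w‖
      ≤ √(2 * π * r) / ‖z‖ * (ε * ∑ m ∈ Finset.range M, (r / ‖z‖) ^ m)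
        + √(2 * π * σ) / (‖z‖ - σ) * (σ / ‖z‖) ^ M := by
    intro σ hσ
    have hσA : σ ∈ Ioo a b := ⟨hσ.1, hσ.2.trans hz⟩
    rw [circleIntegral_eq_of_differentiableOn_annulus ha hkern hs hσ]
    refine (norm_circleIntegral_sub_inv_mul_le_of_lt_norm ha hf hr hε hΓ hσA hσ.2 M).trans ?_
    have hσ0 : 0 < σ := ha.trans_lt hσA.1
    have hσz : σ < ‖z‖ := hσ.2
    exact add_le_add le_rfl (mul_le_of_le_one_right (by positivity)
      ((Real.sqrt_le_sqrt (hH σ hσA.1 hσA.2)).trans_eq Real.sqrt_one))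
  have ha_mem : a ∈ closure (Ioo a ‖z‖) := by
    rw [closure_Ioo haz.ne]
    exact left_mem_Icc.2 haz.le
  refine ContinuousWithinAt.closure_le ha_mem continuousWithinAt_const
    (ContinuousAt.continuousWithinAt ?_) key
  have hz0 : ‖z‖ ≠ 0 := (ha.trans_lt haz).ne'
  have hza : ‖z‖ - a ≠ 0 := (sub_pos.2 haz).ne'
  fun_prop (disch := assumption)

theorem two_pi_mul_norm_le_of_annulus (ha : 0 ≤ a) (hf : DifferentiableOn ℂ f (annulus a b))
    (hH : ∀ s, a < s → s < b → circleNormSq f s ≤ 1) (hr : r ∈ Ioo a b) (hε : 0 ≤ ε)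
    (hΓ : circleNormSq f r ≤ ε ^ 2) {z : ℂ} (hz : ‖z‖ ∈ Ioo a b) (N M : ℕ) :
    2 * π * ‖f z‖
      ≤ √(2 * π * r) / r * (ε * ∑ n ∈ Finset.range N, (‖z‖ / r) ^ n)
        + √(2 * π * b) / (b - ‖z‖) * (‖z‖ / b) ^ N
        + (√(2 * π * r) / ‖z‖ * (ε * ∑ m ∈ Finset.range M, (r / ‖z‖) ^ m)
          + √(2 * π * a) / (‖z‖ - a) * (a / ‖z‖) ^ M) := by
  obtain ⟨s₁, h₁, h₁z⟩ := exists_between hz.1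
  obtain ⟨s₂, hz₂, h₂⟩ := exists_between hz.2
  calc 2 * π * ‖f z‖ = ‖2 * π * I * f z‖ := by simp [abs_of_pos pi_pos]
    _ = ‖(∮ w in C(0, s₂), (w - z)⁻¹ * f w) - ∮ w in C(0, s₁), (w - z)⁻¹ * f w‖ := by
        rw [circleIntegral_sub_inv_mul_sub_circleIntegral_sub_inv_mul ha hf h₁ h₁z hz₂ h₂]
    _ ≤ _ := (norm_sub_le _ _).trans (add_le_add
        (norm_circleIntegral_sub_inv_mul_le_outer ha hf hH hr hε hΓ hz.1 ⟨hz₂, h₂⟩ N)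
        (norm_circleIntegral_sub_inv_mul_le_inner ha hf hH hr hε hΓ hz.2 ⟨h₁, h₁z⟩ M))

end bounds

/-- `q` is the growth ratio of Laurent terms known only up to `ε`, `p` the decay ratio of the
truncation remainder: some truncation order `N` makes both contributions `O(ε ^ γ)`. -/
def GeomTradeoff (q p γ : ℝ) : Prop :=
  ∃ A, 0 ≤ A ∧ ∀ ε > 0, ∃ N : ℕ, ε * ∑ n ∈ Finset.range N, q ^ n ≤ A * ε ^ γ ∧ p ^ N ≤ ε ^ γ

theorem geomTradeoff_of_lt_one {q p γ : ℝ} (hq0 : 0 ≤ q) (hq1 : q < 1)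
    (hp1 : p < 1) (hγ0 : 0 ≤ γ) (hγ1 : γ ≤ 1) : GeomTradeoff q p γ := by
  refine ⟨(1 - q)⁻¹, by simpa using hq1.le, fun ε hε ↦ ?_⟩
  rcases le_or_gt 1 ε with hε1 | hε1
  · exact ⟨0, by simp; positivity, by simpa using one_le_rpow hε1 hγ0⟩
  have hεγ : ε ≤ ε ^ γ := by
    simpa using rpow_le_rpow_of_exponent_ge hε hε1.le hγ1
  obtain ⟨N, hN⟩ := exists_pow_lt_of_lt_one hε hp1
  refine ⟨N, ?_, hN.le.trans hεγ⟩
  have hsum : ∑ n ∈ Finset.range N, q ^ n ≤ (1 - q)⁻¹ := by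
    have := geom_sum_Ico_le_of_lt_one (m := 0) (n := N) hq0 hq1
    rwa [← Finset.range_eq_Ico, pow_zero, one_div] at this
  calc ε * ∑ n ∈ Finset.range N, q ^ n ≤ ε * (1 - q)⁻¹ := by gcongr
    _ ≤ (1 - q)⁻¹ * ε ^ γ := by rw [mul_comm]; gcongr

theorem geomTradeoff_rpow {a γ : ℝ} (ha0 : 0 < a) (ha1 : a < 1) (hγ0 : 0 ≤ γ) (hγ1 : γ < 1) :
    GeomTradeoff (a ^ γ / a) (a ^ γ) γ := by
  set q := a ^ γ / a
  have hq : 1 < q := by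
    rw [lt_div_iff₀ ha0, one_mul]
    simpa using rpow_lt_rpow_of_exponent_gt ha0 ha1 hγ1
  refine ⟨q / (q - 1), div_nonneg (by linarith) (by linarith), fun ε hε ↦ ?_⟩
  rcases le_or_gt 1 ε with hε1 | hε1
  · exact ⟨0, by simp; positivity, by simpa using one_le_rpow hε1 hγ0⟩
  -- cut where `a ^ N` first drops below `ε`; then `a ε ≤ a ^ N ≤ ε`
  obtain ⟨n, hn₁, hn₂⟩ := exists_nat_pow_near_of_lt_one hε hε1.le ha0 ha1
  set x := a ^ (n + 1)
  have hx0 : 0 < x := by positivity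
  have hax : a * ε ≤ x := by simp only [x, pow_succ]; rw [mul_comm]; gcongr
  refine ⟨n + 1, ?_, ?_⟩
  · have hqN : ε * q ^ (n + 1) ≤ q * ε ^ γ := by
      have : x ^ (γ - 1) ≤ (a * ε) ^ (γ - 1) :=
        rpow_le_rpow_of_nonpos (by positivity) hax (by linarith)
      rw [rpow_sub_one hx0.ne', rpow_sub_one (by positivity), mul_rpow ha0.le hε.le] at this
      calc ε * q ^ (n + 1) = ε * (x ^ γ / x) := by
            rw [div_pow, ← rpow_pow_comm ha0.le]
        _ ≤ ε * (a ^ γ * ε ^ γ / (a * ε)) := by gcongr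
        _ = q * ε ^ γ := by simp only [q]; field_simp
    have hsum : ∑ k ∈ Finset.range (n + 1), q ^ k ≤ q ^ (n + 1) / (q - 1) := by
      rw [geom_sum_eq hq.ne', div_le_div_iff_of_pos_right (by linarith)]
      linarith
    calc ε * ∑ k ∈ Finset.range (n + 1), q ^ k ≤ ε * (q ^ (n + 1) / (q - 1)) := by gcongr
      _ = ε * q ^ (n + 1) / (q - 1) := by ring
      _ ≤ q * ε ^ γ / (q - 1) := by gcongr
      _ = q / (q - 1) * ε ^ γ := by ring
  · rw [rpow_pow_comm ha0.le]
    exact rpow_le_rpow hx0.le hn₁.le hγ0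

section gammaAnn

variable {ρ r : ℝ} {z : ℂ}

theorem gammaAnn_mem_Ico (hρ : 0 < ρ) (hρr : ρ < r) (hr : r < 1) (hz : ρ < ‖z‖)
    (hz1 : ‖z‖ < 1) (hzr : ‖z‖ ≠ r) : gammaAnn ρ r z ∈ Ico 0 1 := by
  have ht0 : 0 < ‖z‖ := hρ.trans hz
  unfold gammaAnn
  split_ifs with hrt
  · have hlogr : Real.log r < 0 := Real.log_neg (hρ.trans hρr) hr
    have hlog : Real.log r < Real.log ‖z‖ := Real.log_lt_log (hρ.trans hρr) hrt
    exact ⟨div_nonneg_of_nonpos (Real.log_neg ht0 hz1).le hlogr.le,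
      (div_lt_one_of_neg hlogr).2 hlog⟩
  · have htr : ‖z‖ < r := lt_of_le_of_ne (not_lt.1 hrt) hzr
    have hpos : 0 < Real.log (‖z‖ / ρ) := Real.log_pos ((one_lt_div hρ).2 hz)
    have hlog : Real.log (‖z‖ / ρ) < Real.log (r / ρ) :=
      Real.log_lt_log (by positivity) (div_lt_div_of_pos_right htr hρ)
    exact ⟨div_nonneg hpos.le (hpos.trans hlog).le, (div_lt_one (hpos.trans hlog)).2 hlog⟩

theorem geomTradeoff_outer (hρ : 0 < ρ) (hρr : ρ < r) (hr : r < 1) (hz : ρ < ‖z‖)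
    (hz1 : ‖z‖ < 1) (hzr : ‖z‖ ≠ r) : GeomTradeoff (‖z‖ / r) ‖z‖ (gammaAnn ρ r z) := by
  have hr0 : 0 < r := hρ.trans hρr
  have hγ := gammaAnn_mem_Ico hρ hρr hr hz hz1 hzr
  rcases lt_or_gt_of_ne hzr with htr | hrt
  · exact geomTradeoff_of_lt_one (by positivity) ((div_lt_one hr0).2 htr) hz1 hγ.1 hγ.2.le
  · have hpow : r ^ gammaAnn ρ r z = ‖z‖ := by
      rw [gammaAnn, if_pos hrt]
      exact rpow_logb hr0 hr.ne (hρ.trans hz)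
    simpa only [hpow] using geomTradeoff_rpow hr0 hr hγ.1 hγ.2

theorem geomTradeoff_inner (hρ : 0 < ρ) (hρr : ρ < r) (hr : r < 1) (hz : ρ < ‖z‖)
    (hz1 : ‖z‖ < 1) (hzr : ‖z‖ ≠ r) : GeomTradeoff (r / ‖z‖) (ρ / ‖z‖) (gammaAnn ρ r z) := by
  have hr0 : 0 < r := hρ.trans hρr
  have ht0 : 0 < ‖z‖ := hρ.trans hz
  have hγ := gammaAnn_mem_Ico hρ hρr hr hz hz1 hzr
  rcases lt_or_gt_of_ne hzr with htr | hrt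
  · have hpow : (ρ / r) ^ gammaAnn ρ r z = ρ / ‖z‖ := by
      rw [gammaAnn, if_neg (not_lt.2 htr.le), ← inv_div, inv_rpow (by positivity)]
      rw [show Real.log (‖z‖ / ρ) / Real.log (r / ρ) = Real.logb (r / ρ) (‖z‖ / ρ) from rfl,
        rpow_logb (by positivity) ((one_lt_div hρ).2 hρr).ne' (by positivity), inv_div]
    have h := geomTradeoff_rpow (div_pos hρ hr0) ((div_lt_one hr0).2 hρr) hγ.1 hγ.2
    rwa [hpow, div_div_div_cancel_left' _ _ hρ.ne'] at h
  · exact geomTradeoff_of_lt_one (by positivity) ((div_lt_one ht0).2 hrt)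
      ((div_lt_one ht0).2 hz) hγ.1 hγ.2.le

end gammaAnn

/-- annulus extrapolation bound: if `f` is analytic on
`A_ρ = {ρ < |ζ| < 1}` with `H²(A_ρ)` norm at most `1` (every circle `Γ_s`,
`ρ < s < 1`, carries `L²` mass at most `1`) and `‖f‖_{L²(Γ_r)} ≤ ε`, then
`|f(z)| ≤ C ε^{γ(z)}` with `C` independent of `ε` and `f`. -/
theorem stmt12 (ρ r : ℝ) (hρ : 0 < ρ) (hρr : ρ < r) (hr : r < 1)
    (z : ℂ) (hz : ρ < ‖z‖) (hz1 : ‖z‖ < 1)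
    (hzr : ‖z‖ ≠ r) :
    ∃ C : ℝ, 0 < C ∧ ∀ ε : ℝ, 0 < ε → ∀ f : ℂ → ℂ,
      DifferentiableOn ℂ f {ζ : ℂ | ρ < ‖ζ‖ ∧ ‖ζ‖ < 1} →
      (∀ s : ℝ, ρ < s → s < 1 →
        (∫ t in (0:ℝ)..(2 * Real.pi),
          ‖f ((s : ℂ) * Complex.exp (Complex.I * (t : ℂ)))‖ ^ 2 * s) ≤ 1) →
      (∫ t in (0:ℝ)..(2 * Real.pi),
          ‖f ((r : ℂ) * Complex.exp (Complex.I * (t : ℂ)))‖ ^ 2 * r) ≤ ε ^ 2 →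
      ‖f z‖ ≤ C * ε ^ gammaAnn ρ r z := by
  have hr0 : 0 < r := hρ.trans hρr
  have ht0 : 0 < ‖z‖ := hρ.trans hz
  obtain ⟨A, hA0, hA⟩ := geomTradeoff_outer hρ hρr hr hz hz1 hzr
  obtain ⟨B, hB0, hB⟩ := geomTradeoff_inner hρ hρr hr hz hz1 hzr
  refine ⟨(√(2 * π * r) / r * A + √(2 * π * 1) / (1 - ‖z‖)
    + (√(2 * π * r) / ‖z‖ * B + √(2 * π * ρ) / (‖z‖ - ρ))) / (2 * π), by positivity,
    fun ε hε f hf hH hΓ ↦ ?_⟩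
  obtain ⟨N, hN, hN'⟩ := hA ε hε
  obtain ⟨M, hM, hM'⟩ := hB ε hε
  have key := two_pi_mul_norm_le_of_annulus (b := 1) hρ.le hf hH ⟨hρr, hr⟩ hε.le hΓ ⟨hz, hz1⟩ N M
  rw [div_one] at key
  rw [div_mul_eq_mul_div, le_div_iff₀' (by positivity)]
  refine key.trans ?_
  have : 0 ≤ √(2 * π * 1) / (1 - ‖z‖) := by positivity
  have : 0 ≤ √(2 * π * ρ) / (‖z‖ - ρ) := by positivity
  grw [hN, hN', hM, hM']
  exact le_of_eq (by ring)
end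

section
/- Let 0 < ρ < 1, r = √ρ, and let p(ζ, τ) = 1/(1-ζτ̄) + ρ²/(ζτ̄ - ρ²) be the reproducing kernel of the Hardy space of the annulus A_ρ. Then p(ζ, ρ/τ) = p(ρ/ζ, τ) for all ζ ∈ A_ρ and all τ with |τ| = r. Consequently, the integral operator Kf(ζ) = ∫_{Γ_r} p(ζ,τ) f(τ)|dτ| commutes with the reflection projection P_L f(ζ) = (f(ζ) + f(ρ/ζ))/2. -/
open Complex ComplexConjugate MeasureTheory Real

lemma conj_eq_div_of_norm_sq {τ : ℂ} {ρ : ℝ} (h : ‖τ‖ ^ 2 = ρ) : conj τ = ρ / τ := by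
  rcases eq_or_ne τ 0 with rfl | hτ
  · simp
  rw [eq_div_iff hτ, mul_comm, mul_conj, normSq_eq_norm_sq, h]

lemma one_div_one_sub_add_div_sub_eq {a w : ℂ} (ha : a ≠ 0) (hw1 : w ≠ 1) (hwa : w ≠ a) :
    1 / (1 - w) + a / (w - a) = 1 / (1 - a / w) + a / (a / w - a) := by
  rcases eq_or_ne w 0 with rfl | hw0
  · simp [ha]
  have h1 : 1 - w ≠ 0 := sub_ne_zero.mpr hw1.symm
  have h2 : w - a ≠ 0 := sub_ne_zero.mpr hwa
  field_simp
  ring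

section

variable {ρ : ℝ} {ζ τ : ℂ}

lemma mul_ne_one_of_norm_lt_one (hζ : ‖ζ‖ < 1) (hτ : ‖τ‖ ≤ 1) : ζ * τ ≠ 1 := by
  intro h
  have : ‖ζ * τ‖ < 1 := by
    rw [norm_mul]
    exact mul_lt_one_of_nonneg_of_lt_one_left (norm_nonneg _) hζ hτ
  simp [h] at this

lemma mul_ne_sq_of_lt_norm (hρ : 0 < ρ) (hρ1 : ρ ≤ 1) (hζ : ρ < ‖ζ‖) (hτ : ‖τ‖ ^ 2 = ρ) :
    ζ * τ ≠ (ρ : ℂ) ^ 2 := by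
  intro h
  have h' : ‖ζ‖ ^ 2 * ρ = (ρ ^ 2) ^ 2 :=
    calc ‖ζ‖ ^ 2 * ρ = ‖ζ * τ‖ ^ 2 := by rw [norm_mul, mul_pow, hτ]
      _ = (ρ ^ 2) ^ 2 := by rw [h, norm_pow, norm_real, norm_of_nonneg hρ.le]
  nlinarith [pow_lt_pow_left₀ hζ hρ.le two_ne_zero,
    pow_le_pow_of_le_one hρ.le hρ1 (by norm_num : 3 ≤ 4)]

lemma norm_ofReal_div_mem_Ioo (hρ : 0 < ρ) (h1 : ρ < ‖ζ‖) (h2 : ‖ζ‖ < 1) :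
    ‖(ρ : ℂ) / ζ‖ ∈ Set.Ioo ρ 1 := by
  have hζ : 0 < ‖ζ‖ := hρ.trans h1
  rw [norm_div, norm_real, norm_of_nonneg hρ.le, Set.mem_Ioo, lt_div_iff₀ hζ, div_lt_one hζ]
  exact ⟨mul_lt_of_lt_one_right hρ h2, h1⟩

theorem pAnn_div_right_eq_div_left (hρ : 0 < ρ) (hρ1 : ρ ≤ 1) (h1 : ρ < ‖ζ‖) (h2 : ‖ζ‖ < 1)
    (hτ : ‖τ‖ ^ 2 = ρ) : pAnn ρ ζ (ρ / τ) = pAnn ρ (ρ / ζ) τ := by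
  have hconj : conj τ = ρ / τ := conj_eq_div_of_norm_sq hτ
  have hconj' : conj ((ρ : ℂ) / τ) = τ := by
    rw [map_div₀, conj_ofReal, hconj, div_div_cancel₀ (ofReal_ne_zero.mpr hρ.ne')]
  have hτ1 : ‖τ‖ ≤ 1 := (pow_le_one_iff_of_nonneg (norm_nonneg τ) two_ne_zero).mp (hτ ▸ hρ1)
  unfold pAnn
  rw [hconj', hconj, div_mul_div_comm, ← sq]
  exact one_div_one_sub_add_div_sub_eq (pow_ne_zero 2 (ofReal_ne_zero.mpr hρ.ne'))
    (mul_ne_one_of_norm_lt_one h2 hτ1) (mul_ne_sq_of_lt_norm hρ hρ1 h1 hτ)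

theorem continuous_pAnn_comp {X : Type*} [TopologicalSpace X] {γ : X → ℂ} (hγ : Continuous γ)
    (hγρ : ∀ x, ‖γ x‖ ^ 2 = ρ) (hρ : 0 < ρ) (hρ1 : ρ ≤ 1) (h1 : ρ < ‖ζ‖) (h2 : ‖ζ‖ < 1) :
    Continuous fun x => pAnn ρ ζ (γ x) := by
  have hc : ∀ x, ‖conj (γ x)‖ ^ 2 = ρ := fun x => by rw [RCLike.norm_conj, hγρ]
  have hc1 : ∀ x, ‖conj (γ x)‖ ≤ 1 := fun x =>
    (pow_le_one_iff_of_nonneg (norm_nonneg _) two_ne_zero).mp ((hc x).symm ▸ hρ1)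
  unfold pAnn
  refine (continuous_const.div (by fun_prop) fun x => ?_).add
    (continuous_const.div (by fun_prop) fun x => ?_)
  · exact sub_ne_zero.mpr (mul_ne_one_of_norm_lt_one h2 (hc1 x)).symm
  · exact sub_ne_zero.mpr (mul_ne_sq_of_lt_norm hρ hρ1 h1 (hc x))

end

lemma norm_circleMap_sqrt_sq {ρ : ℝ} (hρ : 0 ≤ ρ) (t : ℝ) : ‖circleMap 0 √ρ t‖ ^ 2 = ρ := by
  rw [norm_circleMap_zero, sq_abs, sq_sqrt hρ]

lemma div_circleMap_sqrt {ρ : ℝ} (hρ : 0 ≤ ρ) (t : ℝ) :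
    (ρ : ℂ) / circleMap 0 √ρ t = circleMap 0 √ρ (2 * π - t) := by
  rw [← conj_eq_div_of_norm_sq (norm_circleMap_sqrt_sq hρ t), conj_circleMap_zero, sub_eq_neg_add,
    periodic_circleMap]

/-- with `r = √ρ`, the kernel satisfies `p(ζ, ρ/τ) = p(ρ/ζ, τ)` for
`ζ ∈ A_ρ` and `|τ| = r`; consequently the integral operator
`Kf(ζ) = ∫_{Γ_r} p(ζ,τ) f(τ) |dτ|` commutes with the reflection projection
`P_L f(ζ) = (f(ζ) + f(ρ/ζ))/2`, i.e. `K(P_L f) = P_L(K f)` on `A_ρ`. -/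
theorem stmt17 (ρ : ℝ) (hρ : 0 < ρ) (hρ1 : ρ < 1) :
    (∀ ζ τ : ℂ, ρ < ‖ζ‖ → ‖ζ‖ < 1 →
      ‖τ‖ = Real.sqrt ρ →
      pAnn ρ ζ ((ρ : ℂ) / τ) = pAnn ρ ((ρ : ℂ) / ζ) τ) ∧
    ∀ f : ℂ → ℂ, ContinuousOn f (Metric.sphere (0 : ℂ) (Real.sqrt ρ)) →
      ∀ ζ : ℂ, ρ < ‖ζ‖ → ‖ζ‖ < 1 →
      (∫ t in (0:ℝ)..(2 * Real.pi),
          pAnn ρ ζ ((Real.sqrt ρ : ℂ) * Complex.exp (Complex.I * (t : ℂ))) *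
            ((f ((Real.sqrt ρ : ℂ) * Complex.exp (Complex.I * (t : ℂ))) +
              f ((ρ : ℂ) / ((Real.sqrt ρ : ℂ) * Complex.exp (Complex.I * (t : ℂ))))) / 2) *
            (Real.sqrt ρ : ℂ))
        = ((∫ t in (0:ℝ)..(2 * Real.pi),
              pAnn ρ ζ ((Real.sqrt ρ : ℂ) * Complex.exp (Complex.I * (t : ℂ))) *
                f ((Real.sqrt ρ : ℂ) * Complex.exp (Complex.I * (t : ℂ))) *
                (Real.sqrt ρ : ℂ)) +
            (∫ t in (0:ℝ)..(2 * Real.pi),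
              pAnn ρ ((ρ : ℂ) / ζ) ((Real.sqrt ρ : ℂ) * Complex.exp (Complex.I * (t : ℂ))) *
                f ((Real.sqrt ρ : ℂ) * Complex.exp (Complex.I * (t : ℂ))) *
                (Real.sqrt ρ : ℂ))) / 2 := by
  refine ⟨fun ζ τ h1 h2 hτ => pAnn_div_right_eq_div_left hρ hρ1.le h1 h2 (hτ ▸ sq_sqrt hρ.le),
    fun f hf ζ h1 h2 => ?_⟩
  have hγ : ∀ t : ℝ, (√ρ : ℂ) * exp (I * t) = circleMap 0 √ρ t := fun t => by
    rw [circleMap_zero, mul_comm I]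
  simp_rw [hγ, div_circleMap_sqrt hρ.le]
  obtain ⟨h1', h2'⟩ := norm_ofReal_div_mem_Ioo hρ h1 h2
  have hfγ : Continuous fun t => f (circleMap 0 √ρ t) :=
    hf.comp_continuous (continuous_circleMap 0 _) (circleMap_mem_sphere 0 (sqrt_nonneg ρ))
  have hK : ∀ z : ℂ, ρ < ‖z‖ → ‖z‖ < 1 → IntervalIntegrable
      (fun t => pAnn ρ z (circleMap 0 √ρ t) * f (circleMap 0 √ρ t) * √ρ) volume 0 (2 * π) :=
    fun z hz1 hz2 => (((continuous_pAnn_comp (continuous_circleMap 0 _)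
      (norm_circleMap_sqrt_sq hρ.le) hρ hρ1.le hz1 hz2).mul hfγ).mul
      continuous_const).intervalIntegrable _ _
  have hrefl : ∀ t, pAnn ρ ζ (circleMap 0 √ρ t) = pAnn ρ (ρ / ζ) (circleMap 0 √ρ (2 * π - t)) :=
    fun t => by
      rw [← pAnn_div_right_eq_div_left hρ hρ1.le h1 h2 (norm_circleMap_sqrt_sq hρ.le _),
        div_circleMap_sqrt hρ.le, sub_sub_cancel]
  have hK' : IntervalIntegrable (fun t => pAnn ρ (ρ / ζ) (circleMap 0 √ρ (2 * π - t)) *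
      f (circleMap 0 √ρ (2 * π - t)) * √ρ) volume 0 (2 * π) := by
    simpa only [sub_self, sub_zero] using ((hK _ h1' h2').comp_sub_left (2 * π)).symm
  calc _ = ∫ t in (0 : ℝ)..2 * π, (pAnn ρ ζ (circleMap 0 √ρ t) * f (circleMap 0 √ρ t) * √ρ
        + pAnn ρ (ρ / ζ) (circleMap 0 √ρ (2 * π - t)) * f (circleMap 0 √ρ (2 * π - t)) * √ρ) / 2 :=
        intervalIntegral.integral_congr fun t _ => by simp only [hrefl t]; ring
    _ = _ := by
      rw [intervalIntegral.integral_div, intervalIntegral.integral_add (hK ζ h1 h2) hK',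
        intervalIntegral.integral_comp_sub_left
          (fun t => pAnn ρ (ρ / ζ) (circleMap 0 √ρ t) * f (circleMap 0 √ρ t) * √ρ),
        sub_self, sub_zero]
end
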